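/- Let F be a field of characteristic 0 and n a positive integer. Let A = ℤ^n with standard basis ε_1, …, ε_n, let T be an n-dimensional F-vector space with basis ∂_1, …, ∂_n, and let φ : T × A → F be the map F-linear in the first variable and additive in the second determined by φ(∂_i, ε_j) = δ_{ij}. Then the generalized Witt algebra W(ℤ^n, T, φ) is isomorphic as a Lie algebra over F to Der_F(F[t_1^{±1}, …, t_n^{±1}]), the Lie algebra of F-linear derivations of the Laurent polynomial ring in n variables over F, via the map sending t^α ∂_i to the derivation t^α t_i (∂/∂t_i). -/

import Mathlib

/-! Generalized Witt algebras `W(A,T,φ)` over a field `F` of characteristic `0`,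
following Djokovic-Zhao. Here `A` is an (additive) abelian group, `T` an
`F`-vector space, and `φ : T × A → F` is `F`-linear in the first variable and
additive in the second (encoded as `φ : T →ₗ[F] (A →+ F)`). -/

namespace GW

variable {F : Type*} [Field F]
variable {A : Type*} [AddCommGroup A]
variable {T : Type*} [AddCommGroup T] [Module F T]
variable (φ : T →ₗ[F] (A →+ F))

/-- The bracket on finitely supported functions `A →₀ T`: the bilinear extension of
`[t^α a, t^β b] = t^(α+β) (φ a β • b - φ b α • a)`. -/
noncomputable def brk (x y : A →₀ T) : A →₀ T :=
  x.sum fun α a => y.sum fun β b => Finsupp.single (α + β) (φ a β • b - φ b α • a)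

lemma brk_zero_left (y : A →₀ T) : brk φ 0 y = 0 := by
  simp [brk]

lemma brk_zero_right (x : A →₀ T) : brk φ x 0 = 0 := by
  simp [brk]

lemma brk_single_single (α β : A) (a b : T) :
    brk φ (Finsupp.single α a) (Finsupp.single β b)
      = Finsupp.single (α + β) (φ a β • b - φ b α • a) := by
  unfold brk
  rw [Finsupp.sum_single_index, Finsupp.sum_single_index]
  · simp
  · simp

lemma brk_add_left (x x' y : A →₀ T) : brk φ (x + x') y = brk φ x y + brk φ x' y := by
  unfold brk
  rw [Finsupp.sum_add_index']
  · intro α; simp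
  · intro α a a'
    rw [← Finsupp.sum_add]
    congr 1
    funext β b
    rw [← Finsupp.single_add]
    congr 1
    simp only [map_add, LinearMap.add_apply, AddMonoidHom.add_apply, add_smul, smul_add]
    abel

lemma brk_add_right (x y y' : A →₀ T) : brk φ x (y + y') = brk φ x y + brk φ x y' := by
  unfold brk
  rw [← Finsupp.sum_add]
  congr 1
  funext α a
  rw [Finsupp.sum_add_index']
  · intro β; simp
  · intro β b b'
    rw [← Finsupp.single_add]
    congr 1
    simp only [map_add, LinearMap.add_apply, AddMonoidHom.add_apply, add_smul, smul_add]
    abel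

lemma brk_neg_swap (x y : A →₀ T) : brk φ y x = - brk φ x y := by
  unfold brk
  rw [Finsupp.sum_comm]
  rw [← Finsupp.sum_neg]
  congr 1
  funext α a
  rw [← Finsupp.sum_neg]
  congr 1
  funext β b
  rw [← Finsupp.single_neg, add_comm β α]
  congr 1
  abel

lemma brk_smul_right (c : F) (x y : A →₀ T) : brk φ x (c • y) = c • brk φ x y := by
  unfold brk
  rw [Finsupp.smul_sum]
  congr 1
  funext α a
  rw [Finsupp.sum_smul_index', Finsupp.smul_sum]
  · congr 1
    funext β b
    rw [Finsupp.smul_single]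
    congr 1
    simp only [map_smul, LinearMap.smul_apply, AddMonoidHom.smul_apply, smul_sub, smul_smul,
      smul_eq_mul]
    rw [mul_comm]
  · intro β; simp

lemma brk_self [CharZero F] (x : A →₀ T) : brk φ x x = 0 := by
  have h : brk φ x x = -brk φ x x := brk_neg_swap φ x x
  have h2 : (2 : F) • brk φ x x = 0 := by
    rw [two_smul]
    nth_rewrite 2 [h]
    simp
  calc brk φ x x = (2 : F)⁻¹ • ((2 : F) • brk φ x x) :=
        (inv_smul_smul₀ two_ne_zero _).symm
    _ = 0 := by rw [h2, smul_zero]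

lemma brk_leibniz (x y z : A →₀ T) :
    brk φ x (brk φ y z) = brk φ (brk φ x y) z + brk φ y (brk φ x z) := by
  induction x using Finsupp.induction_linear with
  | zero => simp [brk_zero_left, brk_zero_right]
  | add f g hf hg =>
      simp only [brk_add_left, brk_add_right, hf, hg]; abel
  | single α a =>
    induction y using Finsupp.induction_linear with
    | zero => simp [brk_zero_left, brk_zero_right]
    | add f g hf hg =>
        simp only [brk_add_left, brk_add_right, hf, hg]; abel
    | single β b =>
      induction z using Finsupp.induction_linear with
      | zero => simp [brk_zero_left, brk_zero_right]
      | add f g hf hg =>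
          simp only [brk_add_left, brk_add_right, hf, hg]; abel
      | single γ c =>
        rw [brk_single_single, brk_single_single, brk_single_single, brk_single_single,
          brk_single_single, brk_single_single]
        rw [show β + (α + γ) = α + β + γ by abel, show α + (β + γ) = α + β + γ by abel,
          ← Finsupp.single_add]
        congr 1
        simp only [map_add, map_sub, map_smul, LinearMap.sub_apply, LinearMap.smul_apply,
          AddMonoidHom.add_apply, AddMonoidHom.sub_apply, AddMonoidHom.smul_apply,
          smul_eq_mul, smul_sub, sub_smul, add_smul, smul_smul]
        ring_nf
        module

variable (F A T) in
/-- The carrier of the generalized Witt algebra `W(A,T,φ)`: finitely supported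
functions from `A` to `T`, where `t^α ∂` corresponds to the function supported
at `α` with value `∂`. -/
@[nolint unusedArguments]
def W (_φ : T →ₗ[F] (A →+ F)) : Type _ := A →₀ T

noncomputable instance : AddCommGroup (W F A T φ) := inferInstanceAs (AddCommGroup (A →₀ T))

noncomputable instance : Module F (W F A T φ) := inferInstanceAs (Module F (A →₀ T))

/-- The element `t^α ∂` of the generalized Witt algebra. -/
noncomputable def tt (α : A) (d : T) : W F A T φ := Finsupp.single α d

/-- The underlying finitely supported function of an element of `W(A,T,φ)`. -/
def toF (x : W F A T φ) : A →₀ T := x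

/-- The Lie ring structure on the generalized Witt algebra `W(A,T,φ)`, with bracket
determined by `[t^α ∂, t^β ∂'] = t^(α+β) (φ(∂,β) • ∂' - φ(∂',α) • ∂)`. -/
noncomputable instance [CharZero F] : LieRing (W F A T φ) :=
  { (inferInstanceAs (AddCommGroup (A →₀ T)) : AddCommGroup (A →₀ T)) with
    bracket := fun x y => brk φ (toF φ x) (toF φ y)
    add_lie := fun x y z => brk_add_left φ x y z
    lie_add := fun x y z => brk_add_right φ x y z
    lie_self := fun x => brk_self φ x
    leibniz_lie := fun x y z => brk_leibniz φ x y z }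

/-- The generalized Witt algebra `W(A,T,φ)` as a Lie algebra over `F`. -/
noncomputable instance [CharZero F] : LieAlgebra F (W F A T φ) :=
  { (inferInstanceAs (Module F (A →₀ T)) : Module F (A →₀ T)) with
    lie_smul := fun c x y => brk_smul_right φ c x y }

@[simp] theorem bracket_tt [CharZero F] (α β : A) (a b : T) :
    ⁅tt φ α a, tt φ β b⁆ = tt φ (α + β) (φ a β • b - φ b α • a) :=
  brk_single_single φ α β a b

/-- Nondegeneracy of the map `φ`. -/
def Nondeg : Prop :=
  (∀ α : A, (∀ d : T, φ d α = 0) → α = 0) ∧ (∀ d : T, (∀ α : A, φ d α = 0) → d = 0)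

/-- `(A', T')` is a nondegenerate pair for `φ`. -/
def NondegPair (A' : AddSubgroup A) (T' : Submodule F T) : Prop :=
  (∀ d ∈ T', (∀ α ∈ A', φ d α = 0) → d = 0) ∧
  (∀ α ∈ A', (∀ d ∈ T', φ d α = 0) → α = 0)

/-- The subset (in fact Lie subalgebra) of `W(A,T,φ)` consisting of the finitely
supported functions supported in `A'` with values in `T'`. -/
def supportedIn (A' : AddSubgroup A) (T' : Submodule F T) : Set (W F A T φ) :=
  {x | (∀ α : A, toF φ x α ∈ T') ∧ ∀ α : A, α ∉ A' → toF φ x α = 0}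

end GW



/-- The pairing `φ(∂, α) = Σ_i ∂_i α_i` on `(Fin n → F) × (Fin n → ℤ)`, i.e. the map
determined by `φ(∂_i, ε_j) = δ_ij`. -/
noncomputable def phiFin (F : Type*) [Field F] (n : ℕ) :
    (Fin n → F) →ₗ[F] ((Fin n → ℤ) →+ F) where
  toFun d :=
  { toFun := fun α => ∑ i, d i * (α i : F)
    map_zero' := by simp
    map_add' := by
      intro α β
      simp [mul_add, Finset.sum_add_distrib] }
  map_add' d d' := by
    refine AddMonoidHom.ext fun α => ?_
    simp [add_mul, Finset.sum_add_distrib]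
  map_smul' c d := by
    refine AddMonoidHom.ext fun α => ?_
    simp [Finset.mul_sum, mul_assoc]

/-! The derivations of a commutative group algebra `R[A]` are classified by their logarithmic
derivatives `β ↦ t^(-β) D(t^β)`, which are exactly the additive maps `A → R[A]`. An element `x`
of `W(A,T,φ)` defines such a map, `β ↦ ∑_α φ(x_α, β) t^α`, and a check on monomials shows that
the resulting derivation `t^β ↦ ∑_α φ(x_α, β) t^(α+β)` turns the Witt bracket into the
commutator. For `A = ℤⁿ` and `φ(∂_i, ε_j) = δ_ij`, an additive map `ℤⁿ → F[ℤⁿ]` is the same as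
its values on the `ε_j`, i.e. an element of `F[ℤⁿ]ⁿ ≅ (ℤⁿ →₀ Fⁿ)`, so the correspondence is
bijective. -/

namespace AddMonoidAlgebra

variable {R A : Type*} [CommSemiring R]

lemma basis_constr_single {M : Type*} [AddCommMonoid M] [Module R M] (f : A → M) (β : A) (c : R) :
    (basis A R).constr R f (single β c) = c • f β := by
  rw [Module.Basis.constr_apply]
  simp [basis]

section AddCommMonoid

variable [AddCommMonoid A]

lemma derivation_ext {M : Type*} [AddCommMonoid M] [Module R[A] M] [Module R M]
    {D D' : Derivation R R[A] M} (h : ∀ β, D (single β 1) = D' (single β 1)) : D = D' :=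
  Derivation.ext <| LinearMap.congr_fun <|
    (basis A R).ext (f₁ := D.toLinearMap) (f₂ := D'.toLinearMap) fun β => by simpa using h β

noncomputable def derivationOfAddHom (δ : A →+ R[A]) : Derivation R R[A] R[A] where
  toLinearMap := (basis A R).constr R fun β => single β 1 * δ β
  map_one_eq_zero' := by simp [one_def, basis_constr_single]
  leibniz' f g := by
    induction f using induction_linear with
    | zero => simp
    | add f f' hf hf' => simp only [add_mul, map_add, hf, hf', add_smul, smul_add]; abel
    | single β c =>
      induction g using induction_linear with
      | zero => simp
      | add g g' hg hg' => simp only [mul_add, map_add, hg, hg', add_smul, smul_add]; abel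
      | single γ d =>
        have hβ : single β c = c • single β (1 : R) := by simp
        have hγ : single γ d = d • single γ (1 : R) := by simp
        have hβγ : single (β + γ) (1 : R) = single β 1 * single γ 1 := by simp [single_mul_single]
        simp only [single_mul_single, basis_constr_single, map_add, smul_eq_mul]
        rw [hβ, hγ, hβγ]
        simp only [Algebra.smul_def, map_mul]
        ring

@[simp]
lemma derivationOfAddHom_single (δ : A →+ R[A]) (β : A) (c : R) :
    derivationOfAddHom δ (single β c) = single β c * δ β := by
  simp [derivationOfAddHom, basis_constr_single, ← smul_mul_assoc]

end AddCommMonoid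

section AddCommGroup

variable [AddCommGroup A]

lemma single_neg_mul_single (β : A) : single (-β) (1 : R) * single β 1 = 1 := by
  simp [single_mul_single, one_def]

noncomputable def logDerivHom (D : Derivation R R[A] R[A]) : A →+ R[A] where
  toFun β := single (-β) 1 * D (single β 1)
  map_zero' := by simp [← one_def]
  map_add' β γ := by
    have hβγ : single (-(β + γ)) (1 : R) = single (-β) 1 * single (-γ) 1 := by
      simp [single_mul_single, add_comm]
    have hmul : single (β + γ) (1 : R) = single β 1 * single γ 1 := by simp [single_mul_single]
    calc single (-(β + γ)) 1 * D (single (β + γ) 1)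
        = (single (-β) 1 * single β 1) * (single (-γ) 1 * D (single γ 1))
          + (single (-γ) 1 * single γ 1) * (single (-β) 1 * D (single β 1)) := by
          rw [hβγ, hmul, D.leibniz, smul_eq_mul, smul_eq_mul]; ring
      _ = _ := by rw [single_neg_mul_single, single_neg_mul_single, one_mul, one_mul, add_comm]

noncomputable def derivationEquivAddHom : (A →+ R[A]) ≃ₗ[R] Derivation R R[A] R[A] where
  toFun := derivationOfAddHom
  invFun := logDerivHom
  map_add' δ δ' := derivation_ext fun β => by simp [mul_add]
  map_smul' c δ := derivation_ext fun β => by simp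
  left_inv δ := by
    ext β
    simp [logDerivHom, ← mul_assoc]
  right_inv D := derivation_ext fun β => by
    simp [logDerivHom, ← mul_assoc, ← one_def]

@[simp]
lemma derivationEquivAddHom_apply_single (δ : A →+ R[A]) (β : A) (c : R) :
    derivationEquivAddHom δ (single β c) = single β c * δ β :=
  derivationOfAddHom_single δ β c

end AddCommGroup

end AddMonoidAlgebra

namespace GW

open AddMonoidAlgebra

variable {F : Type*} [Field F] {A : Type*} [AddCommGroup A] {T : Type*} [AddCommGroup T]
  [Module F T] (φ : T →ₗ[F] (A →+ F))

noncomputable def logDeriv : (A →₀ T) →ₗ[F] (A →+ F[A]) where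
  toFun x :=
    { toFun := fun β => ofCoeff (x.mapRange (φ · β) (by simp))
      map_zero' := by ext; simp
      map_add' := fun β γ => by ext; simp }
  map_add' x y := by ext; simp
  map_smul' c x := by ext; simp

@[simp]
lemma coeff_logDeriv_apply (x : A →₀ T) (β α : A) : (logDeriv φ x β).coeff α = φ (x α) β := rfl

@[simp]
lemma logDeriv_single (α β : A) (d : T) :
    logDeriv φ (Finsupp.single α d) β = single α (φ d β) := by
  change ofCoeff (Finsupp.mapRange _ _ (Finsupp.single α d)) = _
  rw [Finsupp.mapRange_single]
  rfl

lemma derivationEquivAddHom_logDeriv_brk_apply (x y : A →₀ T) (f : F[A]) :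
    derivationEquivAddHom (logDeriv φ (brk φ x y)) f =
      derivationEquivAddHom (logDeriv φ x) (derivationEquivAddHom (logDeriv φ y) f) -
        derivationEquivAddHom (logDeriv φ y) (derivationEquivAddHom (logDeriv φ x) f) := by
  induction x using Finsupp.induction_linear with
  | zero => simp [brk_zero_left]
  | add x x' hx hx' => simp only [brk_add_left, map_add, Derivation.add_apply, hx, hx']; abel
  | single α a =>
    induction y using Finsupp.induction_linear with
    | zero => simp [brk_zero_right]
    | add y y' hy hy' => simp only [brk_add_right, map_add, Derivation.add_apply, hy, hy']; abel
    | single γ b =>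
      induction f using induction_linear with
      | zero => simp
      | add f f' hf hf' => simp only [map_add, hf, hf']; abel
      | single β c =>
        simp only [brk_single_single, Finsupp.single_sub, map_sub, Derivation.coe_sub,
          Pi.sub_apply, derivationEquivAddHom_apply_single, logDeriv_single, map_smul,
          AddMonoidHom.smul_apply, smul_eq_mul, single_mul_single, map_add, mul_add]
        rw [show β + γ + α = β + (α + γ) by abel, show β + α + γ = β + (α + γ) by abel]
        simp only [← single_add, ← single_sub]
        congr 1
        ring

lemma logDeriv_injective (hφ : ∀ d : T, (∀ α : A, φ d α = 0) → d = 0) :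
    Function.Injective (logDeriv φ) := by
  refine (injective_iff_map_eq_zero _).2 fun x hx => Finsupp.ext fun α => hφ _ fun β => ?_
  simpa using congr_arg (fun δ => (δ β).coeff α) hx

variable [CharZero F]

noncomputable def toDerivation : W F A T φ →ₗ⁅F⁆ Derivation F F[A] F[A] where
  toLinearMap := derivationEquivAddHom.toLinearMap ∘ₗ logDeriv φ
  map_lie' {x y} := Derivation.ext fun f =>
    (derivationEquivAddHom_logDeriv_brk_apply φ x y f).trans (Derivation.commutator_apply ..).symm

lemma toDerivation_bijective (hφ : Function.Bijective (logDeriv φ)) :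
    Function.Bijective (toDerivation φ) :=
  derivationEquivAddHom.bijective.comp hφ

lemma toDerivation_apply (x : W F A T φ) :
    toDerivation φ x = derivationEquivAddHom (logDeriv φ (toF φ x)) := rfl

lemma toDerivation_tt_single (α β : A) (d : T) (c : F) :
    toDerivation φ (tt φ α d) (single β c) = single (α + β) (φ d β * c) := by
  rw [toDerivation_apply, derivationEquivAddHom_apply_single]
  change single β c * logDeriv φ (Finsupp.single α d) β = _
  rw [logDeriv_single, single_mul_single, add_comm, mul_comm]

end GW

section PhiFin

variable {F : Type*} [Field F] {n : ℕ}

lemma phiFin_apply (d : Fin n → F) (α : Fin n → ℤ) : phiFin F n d α = ∑ i, d i * α i := rfl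

lemma phiFin_single_left (i : Fin n) (c : F) (β : Fin n → ℤ) :
    phiFin F n (Pi.single i c) β = c * β i := by
  simp [phiFin_apply, Pi.single_apply]

lemma phiFin_single_right (d : Fin n → F) (j : Fin n) : phiFin F n d (Pi.single j 1) = d j := by
  simp [phiFin_apply, Pi.single_apply]

lemma GW.logDeriv_phiFin_bijective : Function.Bijective (GW.logDeriv (phiFin F n)) := by
  refine ⟨GW.logDeriv_injective _ fun d hd => funext fun j => ?_, fun δ => ?_⟩
  · simpa [phiFin_single_right] using hd (Pi.single j 1)
  · refine ⟨∑ j, (δ (Pi.single j 1)).coeff.mapRange (Pi.single j) (Pi.single_zero j), ?_⟩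
    ext j α
    simp [phiFin_single_left, Finsupp.finsetSum_apply, map_sum, Pi.single_apply]

end PhiFin

theorem genWitt_iso_derivations_laurent_general
    (F : Type*) [Field F] [CharZero F] (n : ℕ) :
    ∃ e : GW.W F (Fin n → ℤ) (Fin n → F) (phiFin F n) ≃ₗ⁅F⁆
        Derivation F (AddMonoidAlgebra F (Fin n → ℤ)) (AddMonoidAlgebra F (Fin n → ℤ)),
      ∀ (α : Fin n → ℤ) (i : Fin n) (β : Fin n → ℤ),
        (e (GW.tt (phiFin F n) α (Pi.single i (1 : F))))
            (AddMonoidAlgebra.single β (1 : F))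
          = AddMonoidAlgebra.single (α + β) ((β i : F)) := by
  refine ⟨.ofBijective _ (GW.toDerivation_bijective _ GW.logDeriv_phiFin_bijective),
    fun α i β => ?_⟩
  change GW.toDerivation (phiFin F n) (GW.tt _ α _) (AddMonoidAlgebra.single β 1) = _
  rw [GW.toDerivation_tt_single, phiFin_single_left, one_mul, mul_one]

/-- the generalized Witt algebra `W(ℤⁿ, T, φ)`, with `T` an
`n`-dimensional space with basis `∂_1, …, ∂_n` and `φ(∂_i, ε_j) = δ_ij`, is isomorphic
as a Lie algebra over `F` to `Der_F(F[t₁^{±1}, …, t_n^{±1}])`, via the map sending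
`t^α ∂_i` to the derivation `t^α t_i ∂/∂t_i` (the derivation sending `t^β` to
`β_i t^(α+β)`). -/
theorem genWitt_iso_derivations_laurent
    (F : Type*) [Field F] [CharZero F] (n : ℕ) (hn : 0 < n) :
    ∃ e : GW.W F (Fin n → ℤ) (Fin n → F) (phiFin F n) ≃ₗ⁅F⁆
        Derivation F (AddMonoidAlgebra F (Fin n → ℤ)) (AddMonoidAlgebra F (Fin n → ℤ)),
      ∀ (α : Fin n → ℤ) (i : Fin n) (β : Fin n → ℤ),
        (e (GW.tt (phiFin F n) α (Pi.single i (1 : F))))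
            (AddMonoidAlgebra.single β (1 : F))
          = AddMonoidAlgebra.single (α + β) ((β i : F)) :=
  genWitt_iso_derivations_laurent_general F n
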